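/- Suppose χ, θ are infinite regular cardinals below κ, κ is (<χ)-inaccessible, and c : [κ]² → θ witnesses U(κ, κ, θ, χ). Let P be the poset of pairs (i, x) with i < θ, x ∈ [κ]^{<χ}, and c[x]² ∩ i = ∅, ordered by (i,x) ≤ (j,y) iff i = j and x ⊇ y, together with a top element. Then for every τ < min(χ, θ), the product P^τ has precaliber κ, while P^θ is not κ-cc. -/

import Mathlib

open Cardinal Set Ordinal

noncomputable section

/-- `s` (a set in a `Type 1`, such as a set of ordinals) has small cardinality `μ`. -/
def HasCard {α : Type 1} (s : Set α) (μ : Cardinal.{0}) : Prop :=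
  Cardinal.mk s = Cardinal.lift.{1, 0} μ

/-- `a < b` for sets of ordinals: every element of `a` is below every element of `b`. -/
def SetLT (a b : Set Ordinal) : Prop := ∀ α ∈ a, ∀ β ∈ b, α < β

/-- `A` is a family of `κ`-many pairwise disjoint subsets of `κ`, each of cardinality `χ'`. -/
def IsDisjFamily (κ χ' : Cardinal) (A : Set (Set Ordinal)) : Prop :=
  (∀ a ∈ A, a ⊆ Set.Iio κ.ord ∧ HasCard a χ') ∧
    A.PairwiseDisjoint id ∧ HasCard A κ

/-- `A` is a family of `κ`-many pairwise disjoint subsets of `κ`, each of cardinality `< χ`. -/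
def IsDisjFamilyLT (κ χ : Cardinal) (A : Set (Set Ordinal)) : Prop :=
  (∀ a ∈ A, a ⊆ Set.Iio κ.ord ∧ Cardinal.mk a < Cardinal.lift.{1, 0} χ) ∧
    A.PairwiseDisjoint id ∧ HasCard A κ

/-- `c` is a coloring of pairs of ordinals below `κ` with colors `< θ`. -/
def IsColoring (κ θ : Cardinal) (c : Ordinal → Ordinal → Ordinal) : Prop :=
  ∀ α β : Ordinal, α < β → β < κ.ord → c α β < θ.ord

/-- `c` witnesses `U(κ, μ, θ, χ)`. -/
def WitnessU (κ μ θ χ : Cardinal) (c : Ordinal → Ordinal → Ordinal) : Prop :=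
  IsColoring κ θ c ∧
    ∀ χ' < χ, ∀ A : Set (Set Ordinal), IsDisjFamily κ χ' A →
      ∀ i < θ.ord, ∃ B ⊆ A, HasCard B μ ∧
        ∀ a ∈ B, ∀ b ∈ B, SetLT a b → ∀ α ∈ a, ∀ β ∈ b, i < c α β

/-- The principle `U(κ, μ, θ, χ)`. -/
def U (κ μ θ χ : Cardinal) : Prop := ∃ c, WitnessU κ μ θ χ c

/-- `D` is a club in (the ordinal) `o`: a closed and unbounded subset of `o`. -/
def IsClubOrd (D : Set Ordinal) (o : Ordinal) : Prop :=
  D ⊆ Set.Iio o ∧ (∀ α < o, ∃ β ∈ D, α ≤ β) ∧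
    ∀ γ < o, 0 < γ → (∀ x < γ, ∃ β ∈ D, x < β ∧ β < γ) → γ ∈ D

/-- `S` is stationary in `o`: it meets every club in `o`. -/
def IsStationaryOrd (S : Set Ordinal) (o : Ordinal) : Prop :=
  ∀ D, IsClubOrd D o → (S ∩ D).Nonempty

/-- A condition of the poset `ℙ` associated with `c`: either the top element, or a
pair `(i, x)` with `i < θ`, `x ∈ [κ]^{<χ}`, and `c“[x]² ∩ i = ∅`. -/
def Cond (κ θ χ : Cardinal) (c : Ordinal → Ordinal → Ordinal) : Type 1 :=
  Option {p : Ordinal × Set Ordinal //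
    p.1 < θ.ord ∧ p.2 ⊆ Set.Iio κ.ord ∧
      Cardinal.mk p.2 < Cardinal.lift.{1, 0} χ ∧
      ∀ α ∈ p.2, ∀ β ∈ p.2, α < β → p.1 ≤ c α β}

/-- The ordering of `ℙ`: `(i,x) ≤ (j,y)` iff `i = j` and `x ⊇ y`; `none` is the top. -/
def condLE {κ θ χ : Cardinal} {c : Ordinal → Ordinal → Ordinal} :
    Cond κ θ χ c → Cond κ θ χ c → Prop
  | _, none => True
  | none, some _ => False
  | some p, some q => p.1.1 = q.1.1 ∧ q.1.2 ⊆ p.1.2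

/-- The ordering of the power `ℙ^t`: coordinatewise below `t`. -/
def powLE {κ θ χ : Cardinal} {c : Ordinal → Ordinal → Ordinal} (t : Ordinal)
    (f g : Ordinal → Cond κ θ χ c) : Prop :=
  ∀ j < t, condLE (f j) (g j)

/-!
The Δ-system lemma is where `(<χ)`-inaccessibility enters. For supports `x g ⊆ κ` of size `< χ`,
pick `β < κ` such that for every `γ < κ` there are `κ` many `g` with `x g` disjoint from
`[β, γ)`: otherwise a bad `γ(o)` for each `o` yields `χ` many pairwise disjoint intervals
`[o, γ(o))`, a set of size `< χ` misses one of them, and `κ` would be a union of `χ` sets of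
size `< κ`. A maximal (Zorn) family in which, of any two supports, one avoids `[β, b)` for the
bound `b` of the other has size `κ`; pigeonholing the fewer than `κ` traces `x g ∩ β` then gives
a root `r` with increasing tails.

Precaliber of `ℙ^τ`: take such a Δ-system for the supports `⋃_{j<τ} supp (f j)`, fix a common
pattern (color and trace on `r` at each `j < τ`; there are fewer than `κ` patterns), let `i*` be
the supremum of the `τ < θ` colors, and use `U(κ, κ, θ, χ)` to make `c > i*` between different
tails. For finitely many members, the union of their supports at `j` with the common color is
then a condition: a pair not inside one support lies in two different tails.

No `κ`-cc for `ℙ^θ`: take `f_α(i) = (i, {α})`. A common extension of `f_α` and `f_β` would, at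
coordinate `c(α, β) + 1 < θ`, contain `α` and `β` with color `c(α, β) + 1`.
-/

universe u

theorem mk_Iio_ord_eq_lift (κ : Cardinal.{0}) : #(Iio κ.ord) = lift.{1} κ := by
  rw [Cardinal.mk_Iio_ordinal, card_ord]

theorem exists_subset_mk_eq_forall_eq {ι β : Type u} {c : Cardinal.{u}} (hc : c.IsRegular)
    {S : Set ι} (hS : #S = c) (F : ι → β) (hF : #(F '' S) < c) :
    ∃ b, ∃ J ⊆ S, #J = c ∧ ∀ a ∈ J, F a = b := by
  obtain ⟨⟨b, _⟩, J, hJS, hcJ, hJ⟩ := infinite_pigeonhole_set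
    (fun a : S => (⟨F a, mem_image_of_mem F a.2⟩ : F '' S)) c hS.ge hc.aleph0_le
    (by rwa [hc.cof_ord])
  exact ⟨b, J, hJS, (hS ▸ mk_le_mk_of_subset hJS).antisymm hcJ,
    fun a ha => congrArg Subtype.val (hJ ha)⟩

theorem exists_isChain_mk_eq {ι : Type u} {c : Cardinal.{u}} {S : Set ι} (hS : #S = c)
    (R : ι → ι → Prop) (hR : ∀ T ⊆ S, #T < c → ∃ a ∈ S, a ∉ T ∧ ∀ b ∈ T, R b a) :
    ∃ J ⊆ S, #J = c ∧ IsChain R J := by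
  obtain ⟨J, hJ⟩ := zorn_subset {J | J ⊆ S ∧ IsChain R J} fun C hCS hC => by
    refine ⟨⋃₀ C, ⟨sUnion_subset fun J hJ => (hCS hJ).1, ?_⟩, fun J hJ => subset_sUnion_of_mem hJ⟩
    rintro a ⟨J, hJ, ha⟩ b ⟨J', hJ', hb⟩ hab
    rcases hC.total hJ hJ' with h | h
    exacts [(hCS hJ').2 (h ha) hb hab, (hCS hJ).2 ha (h hb) hab]
  refine ⟨J, hJ.prop.1, (hS ▸ mk_le_mk_of_subset hJ.prop.1).antisymm
    (not_lt.1 fun hlt => ?_), hJ.prop.2⟩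
  obtain ⟨a, haS, haJ, hRa⟩ := hR J hJ.prop.1 hlt
  exact haJ (hJ.mem_of_prop_insert ⟨insert_subset haS hJ.prop.1,
    hJ.prop.2.insert fun b hb _ => Or.inr (hRa b hb)⟩)

theorem HasCard.nonempty {α : Type 1} {S : Set α} {κ : Cardinal.{0}} (hS : HasCard S κ)
    (hκ : κ ≠ 0) : S.Nonempty :=
  nonempty_coe_sort.1 (mk_ne_zero_iff.1 (by rw [show #S = lift.{1} κ from hS]; simpa using hκ))

theorem SetLT.disjoint {a b : Set Ordinal} (h : SetLT a b) : Disjoint a b :=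
  disjoint_left.2 fun α ha hb => (h α ha α hb).false

section Regular

variable {κ χ : Cardinal.{0}}

theorem exists_lt_ord_forall_lt (hκ : κ.IsRegular) {s : Set Ordinal} (hs : s ⊆ Iio κ.ord)
    (hcard : #s < lift.{1} κ) : ∃ b < κ.ord, ∀ α ∈ s, α < b := by
  refine ⟨sSup ((· + 1) '' s), sSup_add_one_lt_of_lt_cof ?_ hs, fun α hα => ?_⟩
  · rwa [← lift_cof, hκ.cof_ord]
  · refine (lt_add_one α).trans_le (le_csSup ⟨κ.ord, ?_⟩ (mem_image_of_mem _ hα))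
    rintro _ ⟨β, hβ, rfl⟩
    exact Order.add_one_le_of_lt (hs hβ)

theorem pow_lt_lift_of_forall_pow_lt (hinacc : ∀ lam < κ, ∀ ν < χ, lam ^ ν < κ)
    {μ ν : Cardinal.{1}}
    (hμ : μ < lift.{1} κ) (hν : ν < lift.{1} χ) : μ ^ ν < lift.{1} κ := by
  obtain ⟨μ, hμκ, rfl⟩ := lt_lift_iff.1 hμ
  obtain ⟨ν, hνχ, rfl⟩ := lt_lift_iff.1 hν
  rw [← lift_power, Cardinal.lift_lt]
  exact hinacc μ hμκ ν hνχ

theorem mk_setOf_subset_Iio_lt (hκ : κ.IsRegular) (hχκ : χ < κ)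
    (hinacc : ∀ lam < κ, ∀ ν < χ, lam ^ ν < κ) {β : Ordinal} (hβ : β < κ.ord) :
    #{s : Set Ordinal | s ⊆ Iio β ∧ #s < lift.{1} χ} < lift.{1} κ := by
  have hcover : {s : Set Ordinal | s ⊆ Iio β ∧ #s < lift.{1} χ} ⊆
      ⋃ ν ∈ Iio χ.ord, range fun f : Iio ν → Iio β => range fun a => (f a).1 := by
    rintro s ⟨hsβ, hsχ⟩
    obtain ⟨ν, hνχ, hν⟩ := lt_lift_iff.1 hsχ
    obtain ⟨e⟩ := Cardinal.eq.1 ((mk_Iio_ord_eq_lift ν).trans hν)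
    refine mem_biUnion (ord_lt_ord.2 hνχ) ⟨fun a => ⟨e a, hsβ (e a).2⟩, ?_⟩
    exact (e.surjective.range_comp Subtype.val).trans Subtype.range_coe
  refine (mk_le_mk_of_subset hcover).trans_lt
    ((card_biUnion_lt_iff_forall_of_isRegular hκ.lift ?_).2 fun ν hν => ?_)
  · rwa [mk_Iio_ord_eq_lift, Cardinal.lift_lt]
  · refine mk_range_le.trans_lt ?_
    rw [← power_def, Cardinal.mk_Iio_ordinal, Cardinal.mk_Iio_ordinal]
    exact pow_lt_lift_of_forall_pow_lt hinacc (Cardinal.lift_lt.2 (lt_ord.1 hβ))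
      (Cardinal.lift_lt.2 (lt_ord.1 hν))


theorem exists_disjoint_Ico_of_isChain {O s : Set Ordinal} (γ : Ordinal → Ordinal)
    (hO : IsChain (fun o o' => γ o ≤ o') O) (hs : #s < #O) :
    ∃ o ∈ O, Disjoint s (Ico o (γ o)) := by
  by_contra! h
  choose! f hfs hfI using fun o ho => not_disjoint_iff.1 (h o ho)
  have hinj : InjOn f O := by
    intro o ho o' ho' hff
    by_contra hne
    rcases hO ho ho' hne with hoo' | hoo'
    · exact ((hfI o ho).2.trans_le (hoo'.trans (hfI o' ho').1)).ne hff
    · exact ((hfI o' ho').2.trans_le (hoo'.trans (hfI o ho).1)).ne hff.symm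
  refine hs.not_ge ?_
  rw [← mk_image_eq_of_injOn f O hinj]
  exact mk_le_mk_of_subset (image_subset_iff.2 hfs)

theorem exists_isChain_apply_le (hκ : κ.IsRegular) (γ : Ordinal → Ordinal)
    (hγ : ∀ o < κ.ord, γ o < κ.ord) :
    ∃ O ⊆ Iio κ.ord, #O = lift.{1} κ ∧ IsChain (fun o o' => γ o ≤ o') O := by
  refine exists_isChain_mk_eq (mk_Iio_ord_eq_lift κ) _ fun T hT hTκ => ?_
  obtain ⟨b, hbκ, hb⟩ := exists_lt_ord_forall_lt hκ (s := (fun o => max o (γ o)) '' T)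
    (image_subset_iff.2 fun o ho => max_lt (hT ho) (hγ o (hT ho))) (mk_image_le.trans_lt hTκ)
  exact ⟨b, hbκ, fun hbT => (hb _ (mem_image_of_mem _ hbT)).not_ge (le_max_left _ _),
    fun o ho => (le_max_right _ _).trans (hb _ (mem_image_of_mem _ ho)).le⟩

theorem exists_forall_hasCard_disjoint_Ico (hκ : κ.IsRegular) (hχκ : χ < κ) {ι : Type 1}
    {S : Set ι} (hS : HasCard S κ) (x : ι → Set Ordinal)
    (hx : ∀ g ∈ S, #(x g) < lift.{1} χ) :
    ∃ β < κ.ord, ∀ γ < κ.ord, HasCard {g ∈ S | Disjoint (x g) (Ico β γ)} κ := by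
  by_contra! hbad
  choose! γ hγκ hγ using hbad
  obtain ⟨O, hOκ, hOcard, hO⟩ := exists_isChain_apply_le hκ γ hγκ
  obtain ⟨O', hO'O, hO'card⟩ :=
    le_mk_iff_exists_subset.1 (hOcard ▸ Cardinal.lift_le.2 hχκ.le : lift.{1} χ ≤ #O)
  have hcover : S ⊆ ⋃ o ∈ O', {g ∈ S | Disjoint (x g) (Ico o (γ o))} := fun g hg => by
    obtain ⟨o, ho, hgo⟩ := exists_disjoint_Ico_of_isChain γ (hO.mono hO'O)
      ((hx g hg).trans_eq hO'card.symm)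
    exact mem_biUnion ho ⟨hg, hgo⟩
  refine (mk_le_mk_of_subset hcover).not_gt ?_
  rw [show #S = lift.{1} κ from hS]
  refine (card_biUnion_lt_iff_forall_of_isRegular hκ.lift ?_).2 fun o ho => ?_
  · rwa [hO'card, Cardinal.lift_lt]
  · exact ((mk_le_mk_of_subset (sep_subset _ _)).trans_eq hS).lt_of_ne (hγ o (hOκ (hO'O ho)))

theorem exists_deltaSystem (hκ : κ.IsRegular) (hχκ : χ < κ)
    (hinacc : ∀ lam < κ, ∀ ν < χ, lam ^ ν < κ) {ι : Type 1} {S : Set ι} (hS : HasCard S κ)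
    (x : ι → Set Ordinal) (hx : ∀ g ∈ S, x g ⊆ Iio κ.ord ∧ #(x g) < lift.{1} χ) :
    ∃ J ⊆ S, HasCard J κ ∧ ∃ r, (∀ g ∈ J, r ⊆ x g) ∧
      IsChain (fun g g' => SetLT (x g \ r) (x g' \ r)) J := by
  obtain ⟨β, hβκ, hβ⟩ := exists_forall_hasCard_disjoint_Ico hκ hχκ hS x fun g hg => (hx g hg).2
  choose! b hbκ hb using fun g hg =>
    exists_lt_ord_forall_lt hκ (hx g hg).1 ((hx g hg).2.trans (Cardinal.lift_lt.2 hχκ))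
  obtain ⟨J₁, hJ₁S, hJ₁, hchain⟩ :=
    exists_isChain_mk_eq hS (fun g g' => Disjoint (x g') (Ico β (b g))) fun T hTS hTκ => by
      obtain ⟨γ, hγκ, hγ⟩ := exists_lt_ord_forall_lt hκ (s := b '' T)
        (image_subset_iff.2 fun g hg => hbκ g (hTS hg)) (mk_image_le.trans_lt hTκ)
      obtain ⟨g', ⟨hg'S, hg'⟩, hg'T⟩ := not_subset.1 fun hsub =>
        ((mk_le_mk_of_subset hsub).trans_lt hTκ).ne (hβ γ hγκ)
      exact ⟨g', hg'S, hg'T, fun g hg =>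
        hg'.mono_right (Ico_subset_Ico_right (hγ _ (mem_image_of_mem b hg)).le)⟩
  obtain ⟨r, J, hJJ₁, hJ, hJr⟩ := exists_subset_mk_eq_forall_eq hκ.lift hJ₁
    (fun g => x g ∩ Iio β) <| (mk_le_mk_of_subset (t := {s | s ⊆ Iio β ∧ #s < lift.{1} χ})
      (image_subset_iff.2 fun g hg => ⟨inter_subset_right,
        (mk_le_mk_of_subset inter_subset_left).trans_lt (hx g (hJ₁S hg)).2⟩)).trans_lt
      (mk_setOf_subset_Iio_lt hκ hχκ hinacc hβκ)
  have htail : ∀ g ∈ J, ∀ g' ∈ J, Disjoint (x g') (Ico β (b g)) →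
      SetLT (x g \ r) (x g' \ r) := by
    intro g hg g' hg' hgg' α hα α' hα'
    refine (hb g (hJ₁S (hJJ₁ hg)) α hα.1).trans_le (not_lt.1 fun hα'b => hα'.2 ?_)
    exact hJr g' hg' ▸ ⟨hα'.1, not_le.1 fun hβα' => disjoint_left.1 hgg' hα'.1 ⟨hβα', hα'b⟩⟩
  exact ⟨J, hJJ₁.trans hJ₁S, hJ, r, fun g hg => hJr g hg ▸ inter_subset_left,
    fun g hg g' hg' hne => (hchain (hJJ₁ hg) (hJJ₁ hg') hne).imp
      (htail g hg g' hg') (htail g' hg' g hg)⟩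

theorem exists_subset_hasCard_forall_mk_eq (hκ : κ.IsRegular) (hχκ : χ < κ) {ι : Type 1}
    {S : Set ι} (hS : HasCard S κ) (y : ι → Set Ordinal) (hy : ∀ g ∈ S, #(y g) < lift.{1} χ) :
    ∃ χ' < χ, ∃ J ⊆ S, HasCard J κ ∧ ∀ g ∈ J, #(y g) = lift.{1} χ' := by
  -- `#(y g) : Cardinal.{1}` is not in the universe of `ι`; pigeonhole its `Cardinal.{0}` preimage
  choose! ν hνχ hν using fun g hg => lt_lift_iff.1 (hy g hg)
  have hνS : #(ν '' S) < lift.{1} κ := by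
    refine (mk_le_mk_of_subset (image_subset_iff.2 hνχ : ν '' S ⊆ Iio χ)).trans_lt ?_
    refine (mk_le_of_injective (f := fun μ : Iio χ => (⟨μ.1.ord, ord_lt_ord.2 μ.2⟩ : Iio χ.ord))
      fun μ μ' h => Subtype.ext (ord_injective (congrArg Subtype.val h))).trans_lt ?_
    rwa [mk_Iio_ord_eq_lift, Cardinal.lift_lt]
  obtain ⟨χ', J, hJS, hJ, hJχ'⟩ := exists_subset_mk_eq_forall_eq hκ.lift hS ν hνS
  obtain ⟨g, hg⟩ := HasCard.nonempty hJ hκ.ne_zero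
  exact ⟨χ', hJχ' g hg ▸ hνχ g (hJS hg), J, hJS, hJ, fun g hg => by
    rw [← hν g (hJS hg), hJχ' g hg]⟩

theorem WitnessU.exists_hasCard_lt_color {θ : Cardinal.{0}}
    {c : Ordinal → Ordinal → Ordinal} (hc : WitnessU κ κ θ χ c) (hκ : κ.IsRegular)
    (hχκ : χ < κ) {ι : Type 1} {S : Set ι} (hS : HasCard S κ) (y : ι → Set Ordinal)
    (hy : ∀ g ∈ S, y g ⊆ Iio κ.ord ∧ #(y g) < lift.{1} χ)
    (hchain : IsChain (fun g g' => SetLT (y g) (y g')) S) {i : Ordinal} (hi : i < θ.ord) :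
    ∃ J ⊆ S, HasCard J κ ∧
      ∀ g ∈ J, ∀ g' ∈ J, g ≠ g' → ∀ α ∈ y g, ∀ β ∈ y g', α < β → i < c α β := by
  have horder : ∀ g ∈ S, ∀ g' ∈ S, g ≠ g' → ∀ α ∈ y g, ∀ β ∈ y g', α < β →
      SetLT (y g) (y g') := fun g hg g' hg' hne α hα β hβ hαβ =>
    (hchain hg hg' hne).resolve_right fun h => (h β hβ α hα).not_gt hαβ
  obtain ⟨χ', hχ'χ, J₀, hJ₀S, hJ₀, hsize⟩ :=
    exists_subset_hasCard_forall_mk_eq hκ hχκ hS y fun g hg => (hy g hg).2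
  rcases eq_or_ne χ' 0 with rfl | hχ'
  · refine ⟨J₀, hJ₀S, hJ₀, fun g hg _ _ _ α hα => ?_⟩
    have hempty : y g = ∅ := mk_set_eq_zero_iff.1 (by simpa using hsize g hg)
    exact (hempty ▸ hα).elim
  have hinj : InjOn y J₀ := fun g hg g' hg' hgg' => by
    by_contra hne
    obtain ⟨α, hα⟩ : (y g).Nonempty :=
      nonempty_coe_sort.1 (mk_ne_zero_iff.1 (by simpa [hsize g hg] using hχ'))
    rcases hchain (hJ₀S hg) (hJ₀S hg') hne with h | h <;>
      exact (h α (hgg' ▸ hα) α (hgg' ▸ hα)).false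
  have hfam : IsDisjFamily κ χ' (y '' J₀) := by
    refine ⟨?_, ?_, by rw [HasCard, mk_image_eq_of_injOn _ _ hinj]; exact hJ₀⟩
    · rintro _ ⟨g, hg, rfl⟩
      exact ⟨(hy g (hJ₀S hg)).1, hsize g hg⟩
    · rintro _ ⟨g, hg, rfl⟩ _ ⟨g', hg', rfl⟩ hne
      exact (hchain (hJ₀S hg) (hJ₀S hg') fun h => hne (h ▸ rfl)).elim
        SetLT.disjoint fun h => h.disjoint.symm
  obtain ⟨B, hBJ₀, hB, hBc⟩ :=
    hc.2 χ' hχ'χ (y '' J₀) hfam i hi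
  refine ⟨J₀ ∩ y ⁻¹' B, inter_subset_left.trans hJ₀S, ?_, fun g hg g' hg' hne α hα β hβ hαβ =>
    hBc _ hg.2 _ hg'.2 (horder g (hJ₀S hg.1) g' (hJ₀S hg'.1) hne α hα β hβ hαβ) α hα β hβ⟩
  rw [HasCard, ← mk_image_eq_of_injOn _ _ (hinj.mono inter_subset_left), image_inter_preimage,
    inter_eq_right.2 hBJ₀]
  exact hB

end Regular

namespace Cond

variable {κ θ χ : Cardinal.{0}} {c : Ordinal → Ordinal → Ordinal}

def supp : Cond κ θ χ c → Set Ordinal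
  | none => ∅
  | some q => q.1.2

-- `0` on the top element; harmless, since every condition lies below the top
def color : Cond κ θ χ c → Ordinal
  | none => 0
  | some q => q.1.1

theorem supp_subset : ∀ p : Cond κ θ χ c, p.supp ⊆ Iio κ.ord
  | none => empty_subset _
  | some q => q.2.2.1

theorem mk_supp_lt (hχ : χ ≠ 0) : ∀ p : Cond κ θ χ c, #p.supp < lift.{1} χ
  | none => by simpa [supp, pos_iff_ne_zero] using hχ
  | some q => q.2.2.2.1

theorem color_lt (hθ : θ ≠ 0) : ∀ p : Cond κ θ χ c, p.color < θ.ord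
  | none => by simpa [color, pos_iff_ne_zero] using hθ
  | some q => q.2.1

theorem color_le_of_mem_supp : ∀ (p : Cond κ θ χ c) {α β : Ordinal},
    α ∈ p.supp → β ∈ p.supp → α < β → p.color ≤ c α β
  | none, _, _, hα, _, _ => hα.elim
  | some q, _, _, hα, hβ, hαβ => q.2.2.2.2 _ hα _ hβ hαβ

theorem condLE_refl : ∀ p : Cond κ θ χ c, condLE p p
  | none => trivial
  | some _ => ⟨rfl, subset_rfl⟩

theorem exists_condLE (hχ : χ.IsRegular) {ι : Type 1} {s : Set ι} (hs : #s < lift.{1} χ)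
    (p : ι → Cond κ θ χ c) {i : Ordinal} (hi : i < θ.ord) (hcolor : ∀ k ∈ s, (p k).color = i)
    (hcross : ∀ k ∈ s, ∀ k' ∈ s, ∀ α ∈ (p k).supp, ∀ β ∈ (p k').supp, α < β → i ≤ c α β) :
    ∃ h, ∀ k ∈ s, condLE h (p k) := by
  have hsmall : #(⋃ k ∈ s, (p k).supp) < lift.{1} χ :=
    (card_biUnion_lt_iff_forall_of_isRegular hχ.lift hs).2 fun k _ => (p k).mk_supp_lt hχ.ne_zero
  refine ⟨some ⟨(i, ⋃ k ∈ s, (p k).supp), hi, iUnion₂_subset fun k _ => (p k).supp_subset,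
    hsmall, ?_⟩, fun k hk => ?_⟩
  · simp only [mem_iUnion₂]
    rintro α ⟨k, hk, hα⟩ β ⟨k', hk', hβ⟩
    exact hcross k hk k' hk' α hα β hβ
  · have hsupp : (p k).supp ⊆ ⋃ k ∈ s, (p k).supp :=
      subset_biUnion_of_mem (u := fun k => (p k).supp) hk
    have hcol := hcolor k hk
    revert hsupp hcol
    rcases p k with _ | q
    · exact fun _ _ => trivial
    · exact fun hsupp hcol => ⟨hcol.symm, hsupp⟩

def single (hχ : 1 < χ) {i α : Ordinal} (hi : i < θ.ord) (hα : α < κ.ord) : Cond κ θ χ c :=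
  some ⟨(i, {α}), hi, singleton_subset_iff.2 hα, by simpa using hχ,
    fun _ ha _ hb hab => absurd (ha.trans hb.symm) hab.ne⟩

theorem le_of_condLE_single (hχ : 1 < χ) {h : Cond κ θ χ c} {i α β : Ordinal}
    (hi : i < θ.ord) (hα : α < κ.ord) (hβ : β < κ.ord) (hhα : condLE h (single hχ hi hα))
    (hhβ : condLE h (single hχ hi hβ)) (hαβ : α < β) : i ≤ c α β := by
  rcases h with _ | q
  · exact hhα.elim
  · obtain ⟨rfl, hαq⟩ := hhα
    exact q.2.2.2.2 α (hαq rfl) β (hhβ.2 rfl) hαβ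

end Cond

section Power

variable {κ θ χ : Cardinal.{0}} {c : Ordinal → Ordinal → Ordinal}

def powSupp (τ : Ordinal) (f : Ordinal → Cond κ θ χ c) : Set Ordinal :=
  ⋃ j ∈ Iio τ, (f j).supp

def powPattern (τ : Ordinal) (r : Set Ordinal) (f : Ordinal → Cond κ θ χ c) :
    Iio τ → Ordinal × Set Ordinal :=
  fun j => ((f j).color, (f j).supp ∩ r)

theorem powSupp_subset (τ : Ordinal) (f : Ordinal → Cond κ θ χ c) : powSupp τ f ⊆ Iio κ.ord :=
  iUnion₂_subset fun j _ => (f j).supp_subset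

theorem mk_powSupp_lt (hχ : χ.IsRegular) {τ : Cardinal.{0}} (hτχ : τ < χ)
    (f : Ordinal → Cond κ θ χ c) : #(powSupp τ.ord f) < lift.{1} χ :=
  (card_biUnion_lt_iff_forall_of_isRegular hχ.lift
    (by rwa [mk_Iio_ord_eq_lift, Cardinal.lift_lt])).2 fun j _ => (f j).mk_supp_lt hχ.ne_zero

theorem mk_image_powPattern_lt (hκ : κ.IsRegular) (hθκ : θ < κ) (hθ : θ ≠ 0)
    (hinacc : ∀ lam < κ, ∀ ν < χ, lam ^ ν < κ) {τ : Cardinal.{0}} (hτχ : τ < χ)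
    {r : Set Ordinal} (hr : #r < lift.{1} χ) (S : Set (Ordinal → Cond κ θ χ c)) :
    #(powPattern τ.ord r '' S) < lift.{1} κ := by
  have hsub : powPattern τ.ord r '' S ⊆ {P | ∀ j, P j ∈ Iio θ.ord ×ˢ 𝒫 r} := by
    rintro _ ⟨f, -, rfl⟩ j
    exact ⟨(f j).color_lt hθ, inter_subset_right⟩
  refine (mk_le_mk_of_subset hsub).trans_lt ((mk_congr (Equiv.subtypePiEquivPi
    (β := fun _ : Iio τ.ord => Ordinal × Set Ordinal)
    (p := fun _ P => P ∈ Iio θ.ord ×ˢ 𝒫 r))).trans_lt ?_)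
  rw [← power_def, mk_congr (Equiv.Set.prod _ _),
    mk_prod, Cardinal.lift_id, Cardinal.lift_id, mk_Iio_ord_eq_lift, mk_powerset,
    mk_Iio_ord_eq_lift]
  refine pow_lt_lift_of_forall_pow_lt hinacc
    (mul_lt_of_lt hκ.lift.aleph0_le (Cardinal.lift_lt.2 hθκ) ?_) (Cardinal.lift_lt.2 hτχ)
  exact pow_lt_lift_of_forall_pow_lt hinacc (by simpa using hκ.nat_lt 2) hr

theorem exists_powLE_of_powPattern_eq (hχ : χ.IsRegular) {τ : Ordinal} {r : Set Ordinal}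
    {P : Iio τ → Ordinal × Set Ordinal} (hPθ : ∀ j, (P j).1 < θ.ord)
    {s : Set (Ordinal → Cond κ θ χ c)} (hs : #s < lift.{1} χ)
    (hP : ∀ f ∈ s, powPattern τ r f = P)
    (hcross : ∀ f ∈ s, ∀ f' ∈ s, f ≠ f' → ∀ α ∈ powSupp τ f \ r, ∀ β ∈ powSupp τ f' \ r,
      α < β → ∀ j, (P j).1 ≤ c α β) :
    ∃ h, ∀ f ∈ s, powLE τ h f := by
  have hcoord : ∀ j ∈ Iio τ, ∃ h, ∀ f ∈ s, condLE h (f j) := by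
    intro j hj
    have hcolor : ∀ f ∈ s, (f j).color = (P ⟨j, hj⟩).1 := fun f hf =>
      congrArg Prod.fst (congrFun (hP f hf) ⟨j, hj⟩)
    have htrace : ∀ f ∈ s, (f j).supp ∩ r = (P ⟨j, hj⟩).2 := fun f hf =>
      congrArg Prod.snd (congrFun (hP f hf) ⟨j, hj⟩)
    refine Cond.exists_condLE hχ hs (fun f => f j) (hPθ ⟨j, hj⟩) hcolor
      fun f hf f' hf' α hα β hβ hαβ => ?_
    by_cases hβf : β ∈ (f j).supp
    · exact hcolor f hf ▸ (f j).color_le_of_mem_supp hα hβf hαβ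
    by_cases hαf' : α ∈ (f' j).supp
    · exact hcolor f' hf' ▸ (f' j).color_le_of_mem_supp hαf' hβ hαβ
    -- off the root, `α` and `β` lie in the tails of two distinct members of `s`
    have hne : f ≠ f' := by rintro rfl; exact hβf hβ
    have hαr : α ∉ r := fun hαr =>
      hαf' (((htrace f' hf').trans (htrace f hf).symm ▸ ⟨hα, hαr⟩ : α ∈ (f' j).supp ∩ r).1)
    have hβr : β ∉ r := fun hβr =>
      hβf (((htrace f hf).trans (htrace f' hf').symm ▸ ⟨hβ, hβr⟩ : β ∈ (f j).supp ∩ r).1)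
    exact hcross f hf f' hf' hne α ⟨mem_biUnion hj hα, hαr⟩ β ⟨mem_biUnion hj hβ, hβr⟩ hαβ ⟨j, hj⟩
  have : Nonempty (Cond κ θ χ c) := ⟨none⟩
  choose! h hh using hcoord
  exact ⟨h, fun f hf j hj => hh j hj f hf⟩

theorem exists_centered_pow (hκ : κ.IsRegular) (hθ : θ.IsRegular) (hθκ : θ < κ)
    (hχ : χ.IsRegular) (hχκ : χ < κ) (hinacc : ∀ lam < κ, ∀ ν < χ, lam ^ ν < κ)
    (hc : WitnessU κ κ θ χ c) {τ : Cardinal.{0}} (hτχ : τ < χ) (hτθ : τ < θ)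
    {A : Set (Ordinal → Cond κ θ χ c)} (hA : HasCard A κ) :
    ∃ B ⊆ A, HasCard B κ ∧ ∀ s : Finset (Ordinal → Cond κ θ χ c), ↑s ⊆ B →
      ∃ h, ∀ f ∈ s, powLE τ.ord h f := by
  obtain ⟨J₁, hJ₁A, hJ₁, r, hr, hchain⟩ := exists_deltaSystem hκ hχκ hinacc hA (powSupp τ.ord)
    fun f _ => ⟨powSupp_subset _ f, mk_powSupp_lt hχ hτχ f⟩
  obtain ⟨f₁, hf₁⟩ := hJ₁.nonempty hκ.ne_zero
  obtain ⟨P, J₂, hJ₂J₁, hJ₂, hP⟩ := exists_subset_mk_eq_forall_eq hκ.lift hJ₁ _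
    (mk_image_powPattern_lt hκ hθκ hθ.ne_zero hinacc hτχ
      ((mk_le_mk_of_subset (hr f₁ hf₁)).trans_lt (mk_powSupp_lt hχ hτχ f₁)) J₁)
  obtain ⟨f₂, hf₂⟩ := HasCard.nonempty hJ₂ hκ.ne_zero
  have hPθ : ∀ j, (P j).1 < θ.ord := fun j => hP f₂ hf₂ ▸ (f₂ j).color_lt hθ.ne_zero
  have hi : ⨆ j, (P j).1 < θ.ord := by
    refine lift_iSup_lt_of_lt_cof ?_ hPθ
    rwa [Cardinal.lift_uzero, mk_Iio_ord_eq_lift, ← lift_cof, hθ.cof_ord, Cardinal.lift_lt]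
  obtain ⟨B, hBJ₂, hB, hBc⟩ := hc.exists_hasCard_lt_color hκ hχκ hJ₂
    (fun f => powSupp τ.ord f \ r) (fun f _ => ⟨sdiff_subset.trans (powSupp_subset _ f),
      (mk_le_mk_of_subset sdiff_subset).trans_lt (mk_powSupp_lt hχ hτχ f)⟩)
    (hchain.mono hJ₂J₁) hi
  refine ⟨B, hBJ₂.trans (hJ₂J₁.trans hJ₁A), hB, fun s hs => ?_⟩
  refine exists_powLE_of_powPattern_eq hχ hPθ
    (s.finite_toSet.lt_aleph0.trans_le (aleph0_le_lift.2 hχ.aleph0_le))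
    (fun f hf => hP f (hBJ₂ (hs hf))) fun f hf f' hf' hne α hα β hβ hαβ j => ?_
  exact (le_ciSup ⟨θ.ord, by rintro _ ⟨j, rfl⟩; exact (hPθ j).le⟩ j).trans
    (hBc f (hs hf) f' (hs hf') hne α hα β hβ hαβ).le

theorem exists_antichain_pow (hθ : ℵ₀ ≤ θ) (hχ : 1 < χ) (hc : IsColoring κ θ c) :
    ∃ A : Set (Ordinal → Cond κ θ χ c), HasCard A κ ∧
      ∀ f ∈ A, ∀ g ∈ A, f ≠ g → ¬ ∃ h, powLE θ.ord h f ∧ powLE θ.ord h g := by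
  let F : Iio κ.ord → Ordinal → Cond κ θ χ c := fun a i =>
    if hi : i < θ.ord then Cond.single hχ hi a.2 else none
  have hincomp : ∀ a b : Iio κ.ord, a.1 < b.1 → ∀ h, powLE θ.ord h (F a) →
      ¬ powLE θ.ord h (F b) := by
    intro a b hab h ha hb
    have hi : c a b + 1 < θ.ord := (isSuccLimit_ord hθ).add_one_lt (hc a b hab b.2)
    exact (lt_add_one (c a b)).not_ge (Cond.le_of_condLE_single hχ hi a.2 b.2
      (by simpa [F, hi] using ha _ hi) (by simpa [F, hi] using hb _ hi) hab)
  have hF : Function.Injective F := fun a b hab => by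
    by_contra hne
    have hrefl : powLE θ.ord (F a) (F a) := fun j _ => Cond.condLE_refl _
    rcases lt_or_gt_of_ne (Subtype.val_injective.ne hne) with h | h
    · exact hincomp a b h (F a) hrefl (hab ▸ hrefl)
    · exact hincomp b a h (F a) (hab ▸ hrefl) hrefl
  refine ⟨range F, (mk_range_eq F hF).trans (mk_Iio_ord_eq_lift κ), ?_⟩
  rintro _ ⟨a, rfl⟩ _ ⟨b, rfl⟩ hne ⟨h, ha, hb⟩
  rcases lt_trichotomy a.1 b.1 with hab | hab | hab
  · exact hincomp a b hab h ha hb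
  · exact hne (congrArg F (Subtype.ext hab))
  · exact hincomp b a hab h hb ha

end Power

theorem stmt7_general (κ θ χ : Cardinal) (c : Ordinal → Ordinal → Ordinal)
    (hκreg : κ.IsRegular)
    (hθreg : θ.IsRegular) (hθκ : θ < κ)
    (hχreg : χ.IsRegular) (hχκ : χ < κ)
    (hinacc : ∀ lam < κ, ∀ ν < χ, lam ^ ν < κ)
    (hc : WitnessU κ κ θ χ c) :
    (∀ τ : Cardinal, τ < χ → τ < θ →
      ∀ A : Set (Ordinal → Cond κ θ χ c), HasCard A κ →
        ∃ B ⊆ A, HasCard B κ ∧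
          ∀ s : Finset (Ordinal → Cond κ θ χ c), ↑s ⊆ B →
            ∃ h, ∀ f ∈ s, powLE τ.ord h f) ∧
    ∃ A : Set (Ordinal → Cond κ θ χ c), HasCard A κ ∧
      ∀ f ∈ A, ∀ g ∈ A, f ≠ g →
        ¬ ∃ h, powLE θ.ord h f ∧ powLE θ.ord h g :=
  ⟨fun _ hτχ hτθ _ hA =>
    exists_centered_pow hκreg hθreg hθκ hχreg hχκ hinacc hc hτχ hτθ hA,
    exists_antichain_pow hθreg.aleph0_le (one_lt_aleph0.trans_le hχreg.aleph0_le) hc.1⟩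

theorem stmt7 (κ θ χ : Cardinal) (c : Ordinal → Ordinal → Ordinal)
    (hκreg : κ.IsRegular) (hκunc : ℵ₀ < κ)
    (hθreg : θ.IsRegular) (hθκ : θ < κ)
    (hχreg : χ.IsRegular) (hχκ : χ < κ)
    (hinacc : ∀ lam < κ, ∀ ν < χ, lam ^ ν < κ)
    (hc : WitnessU κ κ θ χ c) :
    (∀ τ : Cardinal, τ < χ → τ < θ →
      ∀ A : Set (Ordinal → Cond κ θ χ c), HasCard A κ →
        ∃ B ⊆ A, HasCard B κ ∧
          ∀ s : Finset (Ordinal → Cond κ θ χ c), ↑s ⊆ B →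
            ∃ h, ∀ f ∈ s, powLE τ.ord h f) ∧
    ∃ A : Set (Ordinal → Cond κ θ χ c), HasCard A κ ∧
      ∀ f ∈ A, ∀ g ∈ A, f ≠ g →
        ¬ ∃ h, powLE θ.ord h f ∧ powLE θ.ord h g :=
  stmt7_general κ θ χ c hκreg hθreg hθκ hχreg hχκ hinacc hc
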